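/- arXiv:2407.12648 — 2 statements merged into one kernel-verified Lean document; each statement's English description precedes it below -/
import Mathlib

section
/- For any complex numbers h₀ and g, if |h₀ + g|² ≥ |h₀|², then for all real numbers a, b with b ≥ a ≥ 1, it holds that |h₀ + g|² ≤ |a·h₀ + b·g|². -/
/-!
The function `t ↦ ‖x + t • y‖` is convex, so once it has not decreased from `t = 0` to `t = 1`
it is nondecreasing on `[1, ∞)`. Scaling the whole vector by `a ≥ 1` only increases the norm,
and `a • x + b • y = a • (x + (b / a) • y)` with `b / a ≥ 1`.
-/

section NormedSpace

variable {E : Type*} [SeminormedAddCommGroup E] [NormedSpace ℝ E] {x y : E}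

theorem norm_add_le_norm_add_smul (h : ‖x‖ ≤ ‖x + y‖) {t : ℝ} (ht : 1 ≤ t) :
    ‖x + y‖ ≤ ‖x + t • y‖ := by
  have ht₀ : 0 < t := by linarith
  have hs : 0 ≤ 1 - t⁻¹ := sub_nonneg.2 (inv_le_one_of_one_le₀ ht)
  -- `x + y` is the convex combination of `x` and `x + t • y` with weights `1 - t⁻¹` and `t⁻¹`.
  have hcomb : x + y = (1 - t⁻¹) • x + t⁻¹ • (x + t • y) := by
    rw [smul_add, smul_smul, inv_mul_cancel₀ ht₀.ne', one_smul, sub_smul, one_smul]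
    abel
  have hle : ‖x + y‖ ≤ (1 - t⁻¹) * ‖x + y‖ + t⁻¹ * ‖x + t • y‖ :=
    calc ‖x + y‖ ≤ ‖(1 - t⁻¹) • x‖ + ‖t⁻¹ • (x + t • y)‖ := hcomb ▸ norm_add_le _ _
      _ = (1 - t⁻¹) * ‖x‖ + t⁻¹ * ‖x + t • y‖ := by
        rw [norm_smul_of_nonneg hs, norm_smul_of_nonneg (inv_nonneg.2 ht₀.le)]
      _ ≤ (1 - t⁻¹) * ‖x + y‖ + t⁻¹ * ‖x + t • y‖ := by gcongr
  have hinv : t⁻¹ * ‖x + y‖ ≤ t⁻¹ * ‖x + t • y‖ := by linarith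
  exact le_of_mul_le_mul_left hinv (inv_pos.2 ht₀)

theorem norm_add_le_norm_smul_add_smul (h : ‖x‖ ≤ ‖x + y‖) {a b : ℝ} (ha : 1 ≤ a)
    (hab : a ≤ b) : ‖x + y‖ ≤ ‖a • x + b • y‖ := by
  have ha₀ : 0 < a := by linarith
  have hfactor : a • x + b • y = a • (x + (b / a) • y) := by
    rw [smul_add, smul_smul, mul_div_cancel₀ b ha₀.ne']
  calc ‖x + y‖ ≤ ‖x + (b / a) • y‖ := norm_add_le_norm_add_smul h ((one_le_div ha₀).2 hab)
    _ ≤ a * ‖x + (b / a) • y‖ := le_mul_of_one_le_left (norm_nonneg _) ha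
    _ = ‖a • x + b • y‖ := by rw [hfactor, norm_smul_of_nonneg ha₀.le]

end NormedSpace

theorem snr_improvement_scaling (h₀ g : ℂ)
    (h : ‖h₀‖ ^ 2 ≤ ‖h₀ + g‖ ^ 2)
    (a b : ℝ) (ha : 1 ≤ a) (hab : a ≤ b) :
    ‖h₀ + g‖ ^ 2 ≤ ‖(a : ℂ) * h₀ + (b : ℂ) * g‖ ^ 2 := by
  rw [sq_le_sq₀ (norm_nonneg _) (norm_nonneg _)] at h ⊢
  simpa only [Complex.real_smul] using norm_add_le_norm_smul_add_smul h ha hab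
end

section
/- For any integer K' ≥ 2 and any real α with |α| ≤ π/K', and for each integer k with 1 ≤ k ≤ K'/2 - 1, it holds that cos(2πk/K' + α) ≤ cos(2πk/K' - π/K') and cos(2π(k + K'/2 - 1)/K' + α) ≤ -cos(2πk/K' - π/K'). -/
open Real

theorem Real.cos_le_cos_of_abs_le_abs {x y : ℝ} (hy : |y| ≤ π) (hxy : |x| ≤ |y|) :
    cos y ≤ cos x := by
  rw [← cos_abs x, ← cos_abs y]
  exact cos_le_cos_of_nonneg_of_le_pi (abs_nonneg x) hy hxy

/-- With `θ = 2πk/K'` and `c = π/K'`, the two buckets are centred at `θ` and at `θ - 2c + π`. -/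
theorem cos_bucket_bounds_of_le {θ c α : ℝ} (hθc : 2 * c ≤ θ) (hθπ : θ + c ≤ π)
    (hα : |α| ≤ c) :
    cos (θ + α) ≤ cos (θ - c) ∧ cos (θ - 2 * c + π + α) ≤ -cos (θ - c) := by
  obtain ⟨hα₁, hα₂⟩ := abs_le.mp hα
  have hθc₀ : |θ - c| = θ - c := abs_of_nonneg (by linarith)
  constructor
  · have hθα : |θ + α| = θ + α := abs_of_nonneg (by linarith)
    apply cos_le_cos_of_abs_le_abs
    · rw [hθα]; linarith
    · rw [hθc₀, hθα]; linarith
  · rw [add_right_comm, cos_add_pi, neg_le_neg_iff]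
    apply cos_le_cos_of_abs_le_abs
    · rw [hθc₀]; linarith
    · rw [hθc₀, abs_le]
      constructor <;> linarith

theorem cosine_bucket_bounds_general (K' : ℕ) (α : ℝ)
    (hα : |α| ≤ π / K') (k : ℕ) (hk1 : 1 ≤ k) (hk2 : (k : ℝ) ≤ (K' : ℝ) / 2 - 1) :
    Real.cos (2 * π * k / K' + α) ≤ Real.cos (2 * π * k / K' - π / K') ∧
      Real.cos (2 * π * ((k : ℝ) + (K' : ℝ) / 2 - 1) / K' + α) ≤
        -Real.cos (2 * π * k / K' - π / K') := by
  have hk : (1 : ℝ) ≤ k := by exact_mod_cast hk1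
  have hK : (0 : ℝ) < K' := by linarith
  have hθc : 2 * (π / K') ≤ 2 * π * k / K' := by
    rw [mul_div_assoc', div_le_div_iff_of_pos_right hK]
    nlinarith [pi_pos]
  have hθπ : 2 * π * k / K' + π / K' ≤ π := by
    rw [← add_div, div_le_iff₀ hK]
    nlinarith [pi_pos]
  have hshift : 2 * π * ((k : ℝ) + (K' : ℝ) / 2 - 1) / K'
      = 2 * π * k / K' - 2 * (π / K') + π := by
    field_simp
    ring
  rw [hshift]
  exact cos_bucket_bounds_of_le hθc hθπ hα

theorem cosine_bucket_bounds (K' : ℕ) (hK' : 2 ≤ K') (α : ℝ)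
    (hα : |α| ≤ π / K') (k : ℕ) (hk1 : 1 ≤ k) (hk2 : (k : ℝ) ≤ (K' : ℝ) / 2 - 1) :
    Real.cos (2 * π * k / K' + α) ≤ Real.cos (2 * π * k / K' - π / K') ∧
      Real.cos (2 * π * ((k : ℝ) + (K' : ℝ) / 2 - 1) / K' + α) ≤
        -Real.cos (2 * π * k / K' - π / K') :=
  cosine_bucket_bounds_general K' α hα k hk1 hk2
end
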